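/- arXiv:2506.10388 — 2 statements merged into one kernel-verified Lean document; each statement's English description precedes it below -/
import Mathlib

section
/- Let {S(t) : t ≥ 0} be an asymptotically closed semigroup on a complete metric space (V,d), T > 0, and let B ⊆ V be a nonempty bounded absorbing set such that N^V(S(kT)B, a·q^k) ≤ b·h^k for all integers k ≥ k₀, for some k₀ ∈ ℕ, a,b > 0, q ∈ (0,1) and h ≥ 1. Then there exists a countable set E₀ ⊆ B such that M₀ = cl_V(E₀) ⊆ B is a T-discrete exponential attractor for the semigroup which attracts at every exponential rate ξ ∈ (0, (1/T)·ln(1/q)) (i.e., for every such ξ and every bounded G ⊆ V, e^{ξt}·dist^V(S(t)G, M₀) → 0 as t → ∞), its fractal dimension satisfies dim_f^V(M₀) ≤ log_{1/q} h, and the semigroup has a global attractor A = Λ^V(M₀) with M₀ = A ∪ E₀. -/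
open Filter Metric Set Topology Bornology
open scoped ENNReal

section Defs

variable {V : Type*} [MetricSpace V]

/-- A semigroup (semiflow) of maps `S t : V → V`, `t ∈ [0,∞)`. -/
def IsSemiflow (S : ℝ → V → V) : Prop :=
  (∀ x : V, S 0 x = x) ∧ ∀ t s : ℝ, 0 ≤ t → 0 ≤ s → ∀ x : V, S t (S s x) = S (t + s) x

/-- One-sided Hausdorff distance `dist^V(G,A) = sup_{x∈G} inf_{y∈A} d(x,y)` (in `ℝ≥0∞`). -/
noncomputable def attrDist (G A : Set V) : ℝ≥0∞ :=
  ⨆ x ∈ G, EMetric.infEdist x A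

/-- The set `A` attracts all bounded subsets of `V`. -/
def AttractsSet (S : ℝ → V → V) (A : Set V) : Prop :=
  ∀ G : Set V, IsBounded G → Tendsto (fun t : ℝ => attrDist (S t '' G) A) atTop (𝓝 0)

/-- A global attractor: nonempty, compact, invariant, attracts all bounded sets. -/
def IsGlobalAttr (S : ℝ → V → V) (A : Set V) : Prop :=
  A.Nonempty ∧ IsCompact A ∧ (∀ t : ℝ, 0 ≤ t → S t '' A = A) ∧ AttractsSet S A

/-- `B` is an absorbing set for the semigroup. -/
def IsAbsorbingSet (S : ℝ → V → V) (B : Set V) : Prop :=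
  ∀ G : Set V, IsBounded G → ∃ tG : ℝ, 0 ≤ tG ∧ ∀ t : ℝ, tG ≤ t → S t '' G ⊆ B

/-- The semigroup is asymptotically closed. -/
def AsympClosed (S : ℝ → V → V) : Prop :=
  ∀ t : ℝ, 0 ≤ t → ∀ tk : ℕ → ℝ, (∀ k, 0 ≤ tk k) → Tendsto tk atTop atTop →
    ∀ xk : ℕ → V, IsBounded (range xk) → ∀ x y : V,
      Tendsto (fun k => S (tk k) (xk k)) atTop (𝓝 x) →
      Tendsto (fun k => S (t + tk k) (xk k)) atTop (𝓝 y) → S t x = y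

/-- The ω-limit set `Λ^V(G) = ⋂_{s ≥ 0} cl_V ⋃_{t ≥ s} S(t)G`. -/
def omegaLim (S : ℝ → V → V) (G : Set V) : Set V :=
  ⋂ (s : ℝ) (_ : 0 ≤ s), closure (⋃ (t : ℝ) (_ : s ≤ t), S t '' G)

/-- `N^V(G,ε)`: minimal number of open `ε`-balls centered in `G` needed to cover `G`. -/
noncomputable def coverN (G : Set V) (ε : ℝ) : ℝ≥0∞ :=
  ⨅ (F : Finset V) (_ : ↑F ⊆ G) (_ : G ⊆ ⋃ x ∈ F, ball x ε), (F.card : ℝ≥0∞)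

open Classical in
/-- Fractal (box-counting) dimension `limsup_{ε→0⁺} log N^V(M,ε) / log (1/ε)`. -/
noncomputable def fracDim (M : Set V) : ℝ≥0∞ :=
  limsup (fun ε : ℝ =>
    if coverN M ε = ⊤ then (⊤ : ℝ≥0∞)
    else ENNReal.ofReal (Real.log (coverN M ε).toReal / Real.log (1 / ε))) (𝓝[>] (0 : ℝ))

/-- `M` attracts all bounded sets at exponential rate `ξ`. -/
def ExpAttractsAt (S : ℝ → V → V) (M : Set V) (ξ : ℝ) : Prop :=
  ∀ G : Set V, IsBounded G →
    Tendsto (fun t : ℝ => ENNReal.ofReal (Real.exp (ξ * t)) * attrDist (S t '' G) M)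
      atTop (𝓝 0)

/-- A `T`-discrete exponential attractor. -/
def IsDiscExpAttr (S : ℝ → V → V) (T : ℝ) (M : Set V) : Prop :=
  M.Nonempty ∧ IsCompact M ∧ S T '' M ⊆ M ∧ fracDim M ≠ ⊤ ∧
    ∃ ξ : ℝ, 0 < ξ ∧ ExpAttractsAt S M ξ

/-- The covering condition `N^V(S(kT)B, a·qᵏ) ≤ b·hᵏ` for `k ≥ k₀`. -/
def CoveringCond (S : ℝ → V → V) (T : ℝ) (B : Set V) (k₀ : ℕ) (a b q h : ℝ) : Prop :=
  ∀ k : ℕ, k₀ ≤ k →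
    coverN (S (k * T) '' B) (a * q ^ k) ≤ ENNReal.ofReal (b * h ^ k)

end Defs

/-!
The points of `E₀` are finite `a qᵏ`-nets of the sets `S(kT)B`, `k ≥ k₁`, together with all their
forward images under `S(T)`; `k₁ ≥ k₀` is chosen so that `S(t)B ⊆ B` for `t ≥ k₁T`.

Once a bounded set `G` has entered `B`, `S(t)G ⊆ S(kT)B` with `k ≈ t/T`, so `S(t)G` lies within
`a qᵏ ≈ a e^{-(t/T) ln(1/q)}` of the level-`k` net; this is the exponential attraction. Points of
level `j ≥ k + k₁` lie in `S(jT)B ⊆ S(kT)B`, so the level-`k` net together with the finitely many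
points of level below `k + k₁` covers `E₀` by `O(k² hᵏ)` balls of radius `a qᵏ`: `closure E₀` is
compact and its fractal dimension is at most `log_{1/q} h`.

A point of `closure E₀ \ E₀` is a limit of points of unbounded level, hence lies in the ω-limit set
of `B`. Since `closure E₀` is compact and attracting, asymptotic closedness makes the ω-limit set of
every bounded set invariant and contained in `Λ = ω(closure E₀)`, and `Λ` is the global attractor.
This gives `S(T)(closure E₀) ⊆ closure E₀` and `closure E₀ = Λ ∪ E₀`.
-/

section CoveringNumbers

variable {V : Type*} [MetricSpace V]

theorem exists_finset_cover_of_coverN_le {G : Set V} {ε c : ℝ} (hc0 : 0 ≤ c)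
    (hc : coverN G ε ≤ ENNReal.ofReal c) :
    ∃ F : Finset V, ↑F ⊆ G ∧ G ⊆ ⋃ x ∈ F, ball x ε ∧ (F.card : ℝ) ≤ c := by
  have hlt : coverN G ε < ((⌊c⌋₊ + 1 : ℕ) : ℝ≥0∞) := by
    refine hc.trans_lt ?_
    rw [← ENNReal.ofReal_natCast]
    refine (ENNReal.ofReal_lt_ofReal_iff (by positivity)).2 ?_
    push_cast
    exact Nat.lt_floor_add_one c
  simp only [coverN, iInf_lt_iff, Nat.cast_lt] at hlt
  obtain ⟨F, hFG, hGF, hcard⟩ := hlt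
  refine ⟨F, hFG, hGF, ?_⟩
  exact (Nat.cast_le.2 (Nat.lt_succ_iff.1 hcard)).trans (Nat.floor_le hc0)

theorem coverN_anti (G : Set V) {ε ε' : ℝ} (h : ε ≤ ε') : coverN G ε' ≤ coverN G ε :=
  iInf₂_mono fun _ _ => iInf_mono' fun hG =>
    ⟨hG.trans (iUnion₂_mono fun _ _ => ball_subset_ball h), le_rfl⟩

theorem one_le_coverN {G : Set V} (hG : G.Nonempty) (ε : ℝ) : 1 ≤ coverN G ε := by
  refine le_iInf₂ fun F _ => le_iInf fun hGF => ?_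
  obtain ⟨x, hx⟩ := hG
  obtain ⟨y, hy, -⟩ := mem_iUnion₂.1 (hGF hx)
  exact_mod_cast Finset.card_pos.2 ⟨y, hy⟩

theorem coverN_two_mul_le_card {M : Set V} {F : Finset V} {r : ℝ}
    (hM : M ⊆ ⋃ x ∈ F, ball x r) : coverN M (2 * r) ≤ F.card := by
  classical
  choose! g hg using fun x (hx : (M ∩ ball x r).Nonempty) => hx
  let F' := (F.filter fun x => (M ∩ ball x r).Nonempty).image g
  have hF'M : ↑F' ⊆ M := by
    intro y hy
    obtain ⟨x, hx, rfl⟩ := Finset.mem_image.1 hy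
    exact (hg x (Finset.mem_filter.1 hx).2).1
  have hMF' : M ⊆ ⋃ y ∈ F', ball y (2 * r) := by
    intro z hz
    obtain ⟨x, hxF, hzx⟩ := mem_iUnion₂.1 (hM hz)
    have hne : (M ∩ ball x r).Nonempty := ⟨z, hz, hzx⟩
    refine mem_iUnion₂.2 ⟨g x, Finset.mem_image_of_mem g (Finset.mem_filter.2 ⟨hxF, hne⟩), ?_⟩
    rw [mem_ball, two_mul]
    calc dist z (g x) ≤ dist z x + dist (g x) x := dist_triangle_right _ _ _
      _ < r + r := add_lt_add hzx (hg x hne).2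
  calc coverN M (2 * r) ≤ F'.card := iInf₂_le_of_le F' hF'M (iInf_le _ hMF')
    _ ≤ F.card := by
      exact_mod_cast Finset.card_image_le.trans (Finset.card_filter_le _ _)

theorem coverN_closure_le_card {s : Set V} {F : Finset V} {r : ℝ} (hr : 0 < r)
    (hs : s ⊆ ⋃ x ∈ F, ball x r) : coverN (closure s) (4 * r) ≤ F.card := by
  have hclosure : closure s ⊆ ⋃ x ∈ F, ball x (2 * r) :=
    calc closure s ⊆ ⋃ x ∈ (F : Set V), closedBall x r :=
          closure_minimal (hs.trans (iUnion₂_mono fun _ _ => ball_subset_closedBall))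
            (F.finite_toSet.isClosed_biUnion fun _ _ => isClosed_closedBall)
      _ ⊆ ⋃ x ∈ F, ball x (2 * r) :=
          iUnion₂_mono fun _ _ => closedBall_subset_ball (by linarith)
  simpa only [← mul_assoc, show (2 : ℝ) * 2 = 4 by norm_num] using
    coverN_two_mul_le_card hclosure

theorem infEDist_le_attrDist {G A : Set V} {x : V} (hx : x ∈ G) :
    infEDist x A ≤ attrDist G A :=
  le_iSup₂ (f := fun x _ => infEDist x A) x hx

theorem attrDist_mono {G G' A A' : Set V} (hG : G ⊆ G') (hA : A' ⊆ A) :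
    attrDist G A ≤ attrDist G' A' :=
  iSup₂_le fun _ hx => (infEDist_anti hA).trans (infEDist_le_attrDist (hG hx))

theorem attrDist_le_of_subset_biUnion_ball {G A : Set V} {F : Finset V} {ρ : ℝ}
    (hG : G ⊆ ⋃ x ∈ F, ball x ρ) (hF : ↑F ⊆ A) : attrDist G A ≤ ENNReal.ofReal ρ := by
  refine iSup₂_le fun y hy => ?_
  obtain ⟨x, hxF, hyx⟩ := mem_iUnion₂.1 (hG hy)
  calc infEDist y A ≤ edist y x := infEDist_le_edist_of_mem (hF hxF)
    _ ≤ ENNReal.ofReal ρ := by rw [edist_dist]; exact ENNReal.ofReal_le_ofReal hyx.le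

end CoveringNumbers

section FractalDimension

variable {V : Type*} [MetricSpace V]

theorem fracDim_le_of_eventually_log_le {M : Set V} (hM : M.Nonempty) {c : ℝ}
    (h : ∀ᶠ ε in 𝓝[>] (0 : ℝ), ∃ N : ℝ,
      coverN M ε ≤ ENNReal.ofReal N ∧ Real.log N ≤ c * Real.log (1 / ε)) :
    fracDim M ≤ ENNReal.ofReal c := by
  refine limsup_le_of_le (by isBoundedDefault) ?_
  filter_upwards [h, Ioo_mem_nhdsGT one_pos] with ε ⟨N, hcov, hlogN⟩ ⟨hε0, hε1⟩
  have hne : coverN M ε ≠ ⊤ := ne_top_of_le_ne_top ENNReal.ofReal_ne_top hcov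
  have hone : 1 ≤ (coverN M ε).toReal := by
    simpa using (ENNReal.toReal_le_toReal ENNReal.one_ne_top hne).2 (one_le_coverN hM ε)
  have hN : 1 ≤ N := ENNReal.one_le_ofReal.1 ((one_le_coverN hM ε).trans hcov)
  have hlogε : 0 < Real.log (1 / ε) := Real.log_pos (by rw [lt_div_iff₀ hε0]; linarith)
  rw [if_neg hne]
  refine ENNReal.ofReal_le_ofReal ((div_le_iff₀ hlogε).2 ?_)
  calc Real.log (coverN M ε).toReal
      ≤ Real.log N :=
        Real.log_le_log (by linarith) (ENNReal.toReal_le_of_le_ofReal (by linarith) hcov)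
    _ ≤ c * Real.log (1 / ε) := hlogN

theorem fracDim_le_of_coverN_geometric_le_of_lt {M : Set V} (hM : M.Nonempty) {r q L c : ℝ}
    (hr : 0 < r) (hq0 : 0 < q) (hq1 : q < 1) (hL : 0 ≤ L) {N : ℕ → ℝ}
    (hN : ∀ m : ℕ, coverN M (r * q ^ m) ≤ ENNReal.ofReal (N m))
    (hgrowth : ∀ c, L < c → ∀ᶠ m : ℕ in atTop, Real.log (N m) ≤ c * m)
    (hc : L / Real.log (1 / q) < c) : fracDim M ≤ ENNReal.ofReal c := by
  set ρ := Real.log (1 / q)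
  have hρ : 0 < ρ := Real.log_pos (by rw [lt_div_iff₀ hq0]; linarith)
  have hcρ : L < c * ρ := (div_lt_iff₀ hρ).1 hc
  have hc0 : 0 ≤ c := (div_nonneg hL hρ.le).trans hc.le
  obtain ⟨c₁, hLc₁, hc₁c⟩ := exists_between hcρ
  have hgrowth' : ∀ᶠ m : ℕ in atTop, Real.log (N (m + 1)) ≤ c₁ * (m + 1) := by
    simpa using (tendsto_add_atTop_nat 1).eventually (hgrowth c₁ hLc₁)
  have hlinear : ∀ᶠ m : ℕ in atTop, c₁ * (m + 1) ≤ c * (m * ρ - Real.log r) := by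
    have : Tendsto (fun m : ℕ => (c * ρ - c₁) * m - (c * Real.log r + c₁)) atTop atTop :=
      tendsto_atTop_add_const_right _ _
        (tendsto_natCast_atTop_atTop.const_mul_atTop (by linarith))
    filter_upwards [this.eventually_ge_atTop 0] with m hm
    linarith
  obtain ⟨m₀, hm₀⟩ := eventually_atTop.1 (hgrowth'.and hlinear)
  have hrq : 0 < r * q ^ m₀ := by positivity
  refine fracDim_le_of_eventually_log_le hM ?_
  filter_upwards [Ioo_mem_nhdsGT hrq] with ε ⟨hε0, hεlt⟩
  obtain ⟨n, hn1, hn2⟩ := exists_nat_pow_near_of_lt_one (div_pos hε0 hrq)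
    ((div_le_one hrq).2 hεlt.le) hq0 hq1
  have hlow : r * q ^ (m₀ + n + 1) ≤ ε := by
    rw [lt_div_iff₀ hrq] at hn1
    calc r * q ^ (m₀ + n + 1) = q ^ (n + 1) * (r * q ^ m₀) := by ring
      _ ≤ ε := hn1.le
  have hup : ε ≤ r * q ^ (m₀ + n) := by
    rw [div_le_iff₀ hrq] at hn2
    calc ε ≤ q ^ n * (r * q ^ m₀) := hn2
      _ = r * q ^ (m₀ + n) := by ring
  have hlogε : (m₀ + n : ℕ) * ρ - Real.log r ≤ Real.log (1 / ε) := by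
    have := Real.log_le_log hε0 hup
    rw [Real.log_mul hr.ne' (by positivity), Real.log_pow] at this
    simp only [ρ, one_div, Real.log_inv]
    linarith
  obtain ⟨h1, h2⟩ := hm₀ (m₀ + n) (Nat.le_add_right _ _)
  refine ⟨N (m₀ + n + 1), (coverN_anti M hlow).trans (hN _), ?_⟩
  calc Real.log (N (m₀ + n + 1)) ≤ c₁ * ((m₀ + n : ℕ) + 1) := h1
    _ ≤ c * ((m₀ + n : ℕ) * ρ - Real.log r) := h2
    _ ≤ c * Real.log (1 / ε) := mul_le_mul_of_nonneg_left hlogε hc0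

theorem fracDim_le_of_coverN_geometric_le {M : Set V} (hM : M.Nonempty) {r q L : ℝ}
    (hr : 0 < r) (hq0 : 0 < q) (hq1 : q < 1) (hL : 0 ≤ L) {N : ℕ → ℝ}
    (hN : ∀ m : ℕ, coverN M (r * q ^ m) ≤ ENNReal.ofReal (N m))
    (hgrowth : ∀ c, L < c → ∀ᶠ m : ℕ in atTop, Real.log (N m) ≤ c * m) :
    fracDim M ≤ ENNReal.ofReal (L / Real.log (1 / q)) := by
  have hofReal : Tendsto ENNReal.ofReal (𝓝[>] (L / Real.log (1 / q)))
      (𝓝 (ENNReal.ofReal (L / Real.log (1 / q)))) :=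
    (ENNReal.continuous_ofReal.tendsto _).mono_left nhdsWithin_le_nhds
  exact ge_of_tendsto hofReal (eventually_nhdsWithin_of_forall fun _ hc =>
    fracDim_le_of_coverN_geometric_le_of_lt hM hr hq0 hq1 hL hN hgrowth hc)

theorem eventually_log_mul_sq_mul_pow_le {C d h c : ℝ} (hC : 0 < C) (hd : 0 < d) (hh : 0 < h)
    (hc : Real.log h < c) :
    ∀ᶠ m : ℕ in atTop, Real.log (C * ((m : ℝ) + d) ^ 2 * h ^ m) ≤ c * m := by
  set δ := (c - Real.log h) / 3
  have hδ : 0 < δ := by simp only [δ]; linarith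
  have hlog : Tendsto (fun x : ℝ => Real.log (x + d) / x) atTop (𝓝 0) := by
    have := (Real.tendsto_pow_log_div_mul_add_atTop 1 (-d) 1 one_ne_zero).comp
      (tendsto_atTop_add_const_right atTop d tendsto_id)
    refine this.congr' (eventually_gt_atTop 0 |>.mono fun x _ => ?_)
    simp
  have hconst : Tendsto (fun x : ℝ => Real.log C / x) atTop (𝓝 0) :=
    tendsto_const_nhds.div_atTop tendsto_id
  filter_upwards [tendsto_natCast_atTop_atTop.eventually (hlog.eventually_le_const hδ),
    tendsto_natCast_atTop_atTop.eventually (hconst.eventually_le_const hδ),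
    eventually_gt_atTop 0] with m hm1 hm2 hm0
  have hm : (0 : ℝ) < m := by exact_mod_cast hm0
  rw [div_le_iff₀ hm] at hm1 hm2
  rw [Real.log_mul (by positivity) (by positivity), Real.log_mul hC.ne' (by positivity),
    Real.log_pow, Real.log_pow]
  simp only [δ] at hm1 hm2
  push_cast
  nlinarith

end FractalDimension

theorem tendsto_exp_mul_mul_pow_floor {ξ q T t₀ : ℝ} (hT : 0 < T) (hq0 : 0 < q) (hq1 : q ≤ 1)
    (hξ : ξ < 1 / T * Real.log (1 / q)) :
    Tendsto (fun t => Real.exp (ξ * t) * q ^ ⌊(t - t₀) / T⌋₊) atTop (𝓝 0) := by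
  set α := ξ + Real.log q / T
  have hα : α < 0 := by
    have : 1 / T * Real.log (1 / q) = -(Real.log q / T) := by
      rw [one_div q, Real.log_inv]; ring
    simp only [α]
    linarith
  set β := -(t₀ / T + 1) * Real.log q
  have hbound : ∀ t, Real.exp (ξ * t) * q ^ ⌊(t - t₀) / T⌋₊ ≤ Real.exp (α * t + β) := by
    intro t
    have hfloor : (t - t₀) / T - 1 ≤ ⌊(t - t₀) / T⌋₊ := by
      linarith [Nat.lt_floor_add_one ((t - t₀) / T)]
    calc Real.exp (ξ * t) * q ^ ⌊(t - t₀) / T⌋₊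
        = Real.exp (ξ * t + ⌊(t - t₀) / T⌋₊ * Real.log q) := by
          rw [Real.exp_add, ← Real.log_pow, Real.exp_log (by positivity)]
      _ ≤ Real.exp (ξ * t + ((t - t₀) / T - 1) * Real.log q) :=
          Real.exp_le_exp.2 (by nlinarith [Real.log_nonpos hq0.le hq1])
      _ = Real.exp (α * t + β) := by
          congr 1
          simp only [α, β]
          field_simp
          ring
  have hlim : Tendsto (fun t => Real.exp (α * t + β)) atTop (𝓝 0) :=
    Real.tendsto_exp_atBot.comp <| tendsto_atBot_add_const_right _ _ <|
      (tendsto_const_mul_atBot_of_neg hα).2 tendsto_id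
  exact squeeze_zero (fun t => by positivity) hbound hlim

namespace IsSemiflow

variable {V : Type*} {S : ℝ → V → V} {T : ℝ} {B : Set V} {k₁ : ℕ}

theorem image_image (hS : IsSemiflow S) {t s : ℝ} (ht : 0 ≤ t) (hs : 0 ≤ s)
    (G : Set V) : S t '' (S s '' G) = S (t + s) '' G := by
  rw [Set.image_image]
  exact image_congr fun x _ => hS.2 t s ht hs x

theorem image_subset_image_of_absorb (hS : IsSemiflow S) {G : Set V} {tG s t : ℝ}
    (hG : ∀ t', tG ≤ t' → S t' '' G ⊆ B) (htG : 0 ≤ tG) (hs : 0 ≤ s) (hst : s + tG ≤ t) :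
    S t '' G ⊆ S s '' B := by
  rw [show t = s + (t - s) by ring, ← hS.image_image hs (by linarith)]
  exact image_mono (hG _ (by linarith))

theorem mapsTo_image_nat_mul (hS : IsSemiflow S) (hT : 0 ≤ T) (k : ℕ) :
    MapsTo (S T) (S (k * T) '' B) (S ((k + 1 : ℕ) * T) '' B) := by
  rw [mapsTo_iff_image_subset, hS.image_image hT (by positivity)]
  push_cast
  ring_nf
  rfl

theorem image_nat_mul_subset_image_nat_mul (hS : IsSemiflow S) (hT : 0 ≤ T)
    (hk₁ : ∀ t, k₁ * T ≤ t → S t '' B ⊆ B) {m j : ℕ} (hmj : m + k₁ ≤ j) :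
    S (j * T) '' B ⊆ S (m * T) '' B :=
  hS.image_subset_image_of_absorb hk₁ (by positivity) (by positivity) <| by
    rw [← add_mul]; gcongr; exact_mod_cast hmj

theorem image_subset_image_nat_mul_floor (hS : IsSemiflow S) (hT : 0 < T) {G : Set V}
    {tG t : ℝ} (hG : ∀ t', tG ≤ t' → S t' '' G ⊆ B) (htG : 0 ≤ tG) (ht : tG + k₁ * T ≤ t) :
    S t '' G ⊆ S ((k₁ + ⌊(t - (tG + k₁ * T)) / T⌋₊ : ℕ) * T) '' B := by
  refine hS.image_subset_image_of_absorb hG htG (by positivity) ?_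
  have := Nat.floor_le (div_nonneg (sub_nonneg.2 ht) hT.le)
  rw [le_div_iff₀ hT] at this
  push_cast
  linarith

end IsSemiflow

section Attraction

variable {V : Type*} [MetricSpace V] {S : ℝ → V → V} {T : ℝ} {B : Set V} {k₁ : ℕ}

theorem expAttractsAt_of_attrDist_le {M : Set V} {r q T ξ : ℝ} (hT : 0 < T) (hq0 : 0 < q)
    (hq1 : q ≤ 1) (hξ : ξ < 1 / T * Real.log (1 / q))
    (h : ∀ G, IsBounded G → ∃ t₀, ∀ t, t₀ ≤ t →
      attrDist (S t '' G) M ≤ ENNReal.ofReal (r * q ^ ⌊(t - t₀) / T⌋₊)) :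
    ExpAttractsAt S M ξ := by
  intro G hG
  obtain ⟨t₀, ht₀⟩ := h G hG
  have hlim := ENNReal.tendsto_ofReal
    ((tendsto_exp_mul_mul_pow_floor (t₀ := t₀) hT hq0 hq1 hξ).const_mul r)
  rw [mul_zero, ENNReal.ofReal_zero] at hlim
  refine tendsto_of_tendsto_of_tendsto_of_le_of_le' tendsto_const_nhds hlim
    (Eventually.of_forall fun _ => zero_le) ?_
  filter_upwards [eventually_ge_atTop t₀] with t ht
  calc ENNReal.ofReal (Real.exp (ξ * t)) * attrDist (S t '' G) M
      ≤ ENNReal.ofReal (Real.exp (ξ * t)) * ENNReal.ofReal (r * q ^ ⌊(t - t₀) / T⌋₊) := by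
        gcongr
        exact ht₀ t ht
    _ = ENNReal.ofReal (r * (Real.exp (ξ * t) * q ^ ⌊(t - t₀) / T⌋₊)) := by
        rw [← ENNReal.ofReal_mul (Real.exp_nonneg _)]
        ring_nf

theorem expAttractsAt_of_attrDist_image_nat_mul_le (hS : IsSemiflow S) (hT : 0 < T)
    (hB : IsAbsorbingSet S B) {M : Set V} {r q ξ : ℝ} (hq0 : 0 < q) (hq1 : q ≤ 1)
    (hξ : ξ < 1 / T * Real.log (1 / q))
    (hlevel : ∀ n : ℕ, attrDist (S ((k₁ + n : ℕ) * T) '' B) M ≤ ENNReal.ofReal (r * q ^ n)) :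
    ExpAttractsAt S M ξ := by
  refine expAttractsAt_of_attrDist_le (r := r) hT hq0 hq1 hξ fun G hG => ?_
  obtain ⟨tG, htG, hGB⟩ := hB G hG
  exact ⟨tG + k₁ * T, fun t ht =>
    (attrDist_mono (hS.image_subset_image_nat_mul_floor hT hGB htG ht) subset_rfl).trans
      (hlevel _)⟩

theorem ExpAttractsAt.attractsSet {M : Set V} {ξ : ℝ} (h : ExpAttractsAt S M ξ) (hξ : 0 ≤ ξ) :
    AttractsSet S M := by
  intro G hG
  refine tendsto_of_tendsto_of_tendsto_of_le_of_le' tendsto_const_nhds (h G hG)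
    (Eventually.of_forall fun _ => zero_le) ?_
  filter_upwards [eventually_ge_atTop 0] with t ht
  refine le_mul_of_one_le_left zero_le ?_
  rw [← ENNReal.ofReal_one]
  exact ENNReal.ofReal_le_ofReal (Real.one_le_exp (by positivity))

theorem IsAbsorbingSet.exists_nat_mul_le (hB : IsAbsorbingSet S B) (hBbdd : IsBounded B)
    (hT : 0 < T) (k₀ : ℕ) : ∃ k₁ : ℕ, k₀ ≤ k₁ ∧ ∀ t, k₁ * T ≤ t → S t '' B ⊆ B := by
  obtain ⟨tB, -, htB⟩ := hB B hBbdd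
  refine ⟨max k₀ ⌈tB / T⌉₊, le_max_left _ _, fun t ht => htB t (le_trans ?_ ht)⟩
  calc tB ≤ ⌈tB / T⌉₊ * T := (div_le_iff₀ hT).1 (Nat.le_ceil _)
    _ ≤ (max k₀ ⌈tB / T⌉₊ : ℕ) * T := by gcongr; exact_mod_cast le_max_right _ _

theorem CoveringCond.exists_nets {k₀ : ℕ} {a b q h : ℝ} (hcov : CoveringCond S T B k₀ a b q h)
    (hb : 0 ≤ b) (hh : 0 ≤ h) (hk : k₀ ≤ k₁) :
    ∃ F : ℕ → Finset V, ∀ n, ↑(F n) ⊆ S ((k₁ + n : ℕ) * T) '' B ∧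
      S ((k₁ + n : ℕ) * T) '' B ⊆ ⋃ x ∈ F n, ball x (a * q ^ k₁ * q ^ n) ∧
      ((F n).card : ℝ) ≤ b * h ^ k₁ * h ^ n := by
  choose F hF using fun n => exists_finset_cover_of_coverN_le (by positivity)
    (hcov (k₁ + n) (hk.trans (Nat.le_add_right _ _)))
  exact ⟨F, fun n => by simpa only [pow_add, mul_assoc] using hF n⟩

theorem IsAbsorbingSet.subset_of_image_eq {A : Set V} (hB : IsAbsorbingSet S B) (hA : IsBounded A)
    (hinv : ∀ t, 0 ≤ t → S t '' A = A) : A ⊆ B := by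
  obtain ⟨t, ht, hAB⟩ := hB A hA
  rw [← hinv t ht]
  exact hAB t le_rfl

end Attraction

theorem closure_iUnion_subset_union_iInter_closure {X : Type*} [TopologicalSpace X] [T1Space X]
    {W : ℕ → Set X} (hW : ∀ n, (W n).Finite) :
    closure (⋃ n, W n) ⊆ (⋃ n, W n) ∪ ⋂ J, closure (⋃ j ≥ J, W j) := by
  intro x hx
  by_cases hxW : x ∈ ⋃ n, W n
  · exact Or.inl hxW
  refine Or.inr (mem_iInter.2 fun J => ?_)
  have hsplit : ⋃ n, W n = (⋃ j < J, W j) ∪ ⋃ j ≥ J, W j := by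
    ext y
    simp only [mem_union, mem_iUnion, exists_prop]
    constructor
    · rintro ⟨j, hj⟩
      exact (lt_or_ge j J).imp (fun h => ⟨j, h, hj⟩) fun h => ⟨j, h, hj⟩
    · rintro (⟨j, -, hj⟩ | ⟨j, -, hj⟩) <;> exact ⟨j, hj⟩
  have hclosed : IsClosed (⋃ j < J, W j) :=
    ((finite_lt_nat J).biUnion fun j _ => hW j).isClosed
  rw [hsplit, closure_union, hclosed.closure_eq] at hx
  refine hx.resolve_left fun h => hxW ?_
  obtain ⟨j, -, hj⟩ := mem_iUnion₂.1 h
  exact mem_iUnion.2 ⟨j, hj⟩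

theorem IsCompact.exists_subseq_tendsto_of_infEDist {V : Type*} [MetricSpace V] {M : Set V}
    (hM : IsCompact M) {v : ℕ → V} (hv : Tendsto (fun n => infEDist (v n) M) atTop (𝓝 0)) :
    ∃ p ∈ M, ∃ φ : ℕ → ℕ, StrictMono φ ∧ Tendsto (v ∘ φ) atTop (𝓝 p) := by
  have hMne : M.Nonempty := by
    by_contra hM0
    rw [not_nonempty_iff_eq_empty.1 hM0] at hv
    simp at hv
  choose w hwM hw using fun n => hM.exists_infEDist_eq_edist hMne (v n)
  obtain ⟨p, hpM, φ, hφ, hwp⟩ := hM.tendsto_subseq hwM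
  refine ⟨p, hpM, φ, hφ, tendsto_of_tendsto_of_dist hwp ?_⟩
  have hvw : Tendsto (fun n => edist (v n) (w n)) atTop (𝓝 0) := by simpa only [hw] using hv
  have := (ENNReal.tendsto_toReal ENNReal.zero_ne_top).comp (hvw.comp hφ.tendsto_atTop)
  simpa [Function.comp_def, dist_comm, edist_dist] using this

section OmegaLimit

variable {V : Type*} [MetricSpace V] {S : ℝ → V → V}

theorem mem_omegaLim_of_tendsto {G : Set V} {x : V} {t : ℕ → ℝ} {g : ℕ → V}
    (ht : Tendsto t atTop atTop) (hg : ∀ n, g n ∈ G)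
    (hx : Tendsto (fun n => S (t n) (g n)) atTop (𝓝 x)) : x ∈ omegaLim S G := by
  refine mem_iInter₂.2 fun s _ => mem_closure_of_tendsto hx ?_
  filter_upwards [ht.eventually_ge_atTop s] with n hn
  exact mem_iUnion₂.2 ⟨t n, hn, mem_image_of_mem _ (hg n)⟩

theorem exists_seq_of_mem_omegaLim {G : Set V} {x : V} (hx : x ∈ omegaLim S G) :
    ∃ t : ℕ → ℝ, ∃ g : ℕ → V, (∀ n : ℕ, (n : ℝ) ≤ t n) ∧ (∀ n, g n ∈ G) ∧
      Tendsto (fun n => S (t n) (g n)) atTop (𝓝 x) := by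
  have hclose : ∀ n : ℕ, ∃ t : ℝ, ∃ g : V, (n : ℝ) ≤ t ∧ g ∈ G ∧ dist (S t g) x < 1 / (n + 1) := by
    intro n
    obtain ⟨y, hy, hxy⟩ := Metric.mem_closure_iff.1
      (mem_iInter₂.1 hx (n : ℝ) n.cast_nonneg) (1 / (n + 1)) Nat.one_div_pos_of_nat
    obtain ⟨t, ht, g, hg, rfl⟩ := by simpa only [mem_iUnion, mem_image] using hy
    exact ⟨t, g, ht, hg, by rwa [dist_comm]⟩
  choose t g ht hg hdist using hclose
  exact ⟨t, g, ht, hg, tendsto_iff_dist_tendsto_zero.2 <|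
    squeeze_zero (fun _ => dist_nonneg) (fun n => (hdist n).le)
      tendsto_one_div_add_atTop_nhds_zero_nat⟩

theorem isClosed_omegaLim (S : ℝ → V → V) (G : Set V) : IsClosed (omegaLim S G) :=
  isClosed_biInter fun _ _ => isClosed_closure

theorem mem_omegaLim_of_forall_mem_image {G : Set V} {x : V} (hx : ∀ s, 0 ≤ s → x ∈ S s '' G) :
    x ∈ omegaLim S G :=
  mem_iInter₂.2 fun s hs => subset_closure (mem_iUnion₂.2 ⟨s, le_rfl, hx s hs⟩)

theorem iInter_closure_subset_omegaLim {G : Set V} {W : ℕ → Set V} {τ : ℕ → ℝ}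
    (hW : ∀ j, W j ⊆ S (τ j) '' G) (hτ : Tendsto τ atTop atTop) :
    ⋂ J, closure (⋃ j ≥ J, W j) ⊆ omegaLim S G := by
  refine fun x hx => mem_iInter₂.2 fun s _ => ?_
  obtain ⟨J, hJ⟩ := eventually_atTop.1 (hτ.eventually_ge_atTop s)
  refine closure_mono ?_ (mem_iInter.1 hx J)
  exact iUnion₂_subset fun j hj => (hW j).trans (subset_iUnion₂_of_subset (τ j) (hJ j hj) le_rfl)

end OmegaLimit

section CompactAttractor

variable {V : Type*} [MetricSpace V] {S : ℝ → V → V} {M G : Set V}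

theorem exists_subseq_tendsto_of_attracts (hM : IsCompact M) (hA : AttractsSet S M)
    (hG : IsBounded G) {g : ℕ → V} (hg : ∀ n, g n ∈ G) {t : ℕ → ℝ} (ht : Tendsto t atTop atTop) :
    ∃ p ∈ M, ∃ φ : ℕ → ℕ, StrictMono φ ∧
      Tendsto (fun n => S (t (φ n)) (g (φ n))) atTop (𝓝 p) :=
  hM.exists_subseq_tendsto_of_infEDist <|
    tendsto_of_tendsto_of_tendsto_of_le_of_le tendsto_const_nhds ((hA G hG).comp ht)
      (fun _ => zero_le) fun n => infEDist_le_attrDist (mem_image_of_mem _ (hg n))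

theorem omegaLim_subset_of_attracts (hM : IsCompact M) (hA : AttractsSet S M)
    (hG : IsBounded G) : omegaLim S G ⊆ M := by
  intro x hx
  obtain ⟨t, g, ht, hg, hx⟩ := exists_seq_of_mem_omegaLim hx
  obtain ⟨p, hp, φ, hφ, hlim⟩ := exists_subseq_tendsto_of_attracts hM hA hG hg
    (tendsto_atTop_mono ht tendsto_natCast_atTop_atTop)
  rwa [tendsto_nhds_unique (hx.comp hφ.tendsto_atTop) hlim]

theorem exists_mem_omegaLim_eq_of_tendsto (hac : AsympClosed S) (hM : IsCompact M)
    (hA : AttractsSet S M) (hG : IsBounded G) {g : ℕ → V} (hg : ∀ n, g n ∈ G) {t : ℕ → ℝ}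
    (ht : Tendsto t atTop atTop) {p : V} (hp : Tendsto (fun n => S (t n) (g n)) atTop (𝓝 p))
    {s : ℝ} (hs : 0 ≤ s) : ∃ u ∈ omegaLim S G, S s u = p := by
  obtain ⟨n₀, hn₀⟩ := eventually_atTop.1 (ht.eventually_ge_atTop s)
  set t' : ℕ → ℝ := fun n => t (n + n₀) - s
  have ht' : Tendsto t' atTop atTop :=
    tendsto_atTop_add_const_right _ _ (ht.comp (tendsto_add_atTop_nat n₀))
  obtain ⟨u, -, φ, hφ, hu⟩ := exists_subseq_tendsto_of_attracts hM hA hG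
    (fun n => hg (n + n₀)) ht'
  refine ⟨u, mem_omegaLim_of_tendsto (ht'.comp hφ.tendsto_atTop) (fun n => hg _) hu, ?_⟩
  refine hac s hs (t' ∘ φ) (fun n => sub_nonneg.2 (hn₀ _ (Nat.le_add_left _ _)))
    (ht'.comp hφ.tendsto_atTop) (fun n => g (φ n + n₀))
    (hG.subset (range_subset_iff.2 fun n => hg _)) u p hu ?_
  simpa [t', Function.comp_def] using hp.comp ((tendsto_add_atTop_nat n₀).comp hφ.tendsto_atTop)

theorem image_omegaLim (hac : AsympClosed S) (hM : IsCompact M) (hA : AttractsSet S M)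
    (hG : IsBounded G) {t : ℝ} (ht : 0 ≤ t) : S t '' omegaLim S G = omegaLim S G := by
  refine Subset.antisymm ?_ fun x hx => ?_
  · rintro _ ⟨x, hx, rfl⟩
    obtain ⟨τ, g, hτ, hg, hx⟩ := exists_seq_of_mem_omegaLim hx
    have hτ' : Tendsto τ atTop atTop := tendsto_atTop_mono hτ tendsto_natCast_atTop_atTop
    have htτ : Tendsto (fun n => t + τ n) atTop atTop := tendsto_atTop_add_const_left _ t hτ'
    obtain ⟨p, -, φ, hφ, hp⟩ := exists_subseq_tendsto_of_attracts hM hA hG hg htτ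
    rw [hac t ht (τ ∘ φ) (fun n => (φ n).cast_nonneg.trans (hτ _)) (hτ'.comp hφ.tendsto_atTop)
      (g ∘ φ) (hG.subset (range_subset_iff.2 fun n => hg _)) x p
      (hx.comp hφ.tendsto_atTop) hp]
    exact mem_omegaLim_of_tendsto (htτ.comp hφ.tendsto_atTop) (fun n => hg _) hp
  · obtain ⟨τ, g, hτ, hg, hx⟩ := exists_seq_of_mem_omegaLim hx
    exact exists_mem_omegaLim_eq_of_tendsto hac hM hA hG hg
      (tendsto_atTop_mono hτ tendsto_natCast_atTop_atTop) hx ht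

theorem omegaLim_subset_omegaLim (hac : AsympClosed S) (hM : IsCompact M)
    (hA : AttractsSet S M) (hG : IsBounded G) : omegaLim S G ⊆ omegaLim S M := by
  intro x hx
  refine mem_omegaLim_of_forall_mem_image fun s hs => ?_
  rw [← image_omegaLim hac hM hA hG hs] at hx
  exact image_mono (omegaLim_subset_of_attracts hM hA hG) hx

theorem omegaLim_nonempty (hM : IsCompact M) (hA : AttractsSet S M) (hG : IsBounded G)
    (hGne : G.Nonempty) : (omegaLim S G).Nonempty := by
  obtain ⟨x, hx⟩ := hGne
  obtain ⟨p, -, φ, hφ, hp⟩ := exists_subseq_tendsto_of_attracts hM hA hG (fun _ => hx)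
    tendsto_natCast_atTop_atTop
  exact ⟨p, mem_omegaLim_of_tendsto
    (tendsto_natCast_atTop_atTop.comp hφ.tendsto_atTop) (fun _ => hx) hp⟩

theorem attractsSet_of_exists_subseq_tendsto {A : Set V}
    (h : ∀ G : Set V, IsBounded G → ∀ g : ℕ → V, (∀ n, g n ∈ G) → ∀ t : ℕ → ℝ,
      Tendsto t atTop atTop → ∃ p ∈ A, ∃ φ : ℕ → ℕ, StrictMono φ ∧
        Tendsto (fun n => S (t (φ n)) (g (φ n))) atTop (𝓝 p)) :
    AttractsSet S A := by
  intro G hG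
  refine ENNReal.tendsto_nhds_zero.2 fun ε hε => ?_
  by_contra hfreq
  choose t ht hfar using fun n : ℕ => frequently_atTop.1 (not_eventually.1 hfreq) n
  have hpoint : ∀ n, ∃ g ∈ G, ε < infEDist (S (t n) g) A := by
    intro n
    obtain ⟨_, ⟨g, hg, rfl⟩, hlt⟩ := lt_biSup_iff.1 (not_le.1 (hfar n))
    exact ⟨g, hg, hlt⟩
  choose g hg hgfar using hpoint
  obtain ⟨p, hp, φ, hφ, hlim⟩ :=
    h G hG g hg t (tendsto_atTop_mono ht tendsto_natCast_atTop_atTop)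
  obtain ⟨n, hn⟩ := ((tendsto_iff_edist_tendsto_0.1 hlim).eventually_lt_const hε).exists
  exact (hgfar (φ n)).not_ge ((infEDist_le_edist_of_mem hp).trans hn.le)

theorem attractsSet_omegaLim (hac : AsympClosed S) (hM : IsCompact M) (hA : AttractsSet S M) :
    AttractsSet S (omegaLim S M) := by
  refine attractsSet_of_exists_subseq_tendsto fun G hG g hg t ht => ?_
  obtain ⟨p, -, φ, hφ, hp⟩ := exists_subseq_tendsto_of_attracts hM hA hG hg ht
  exact ⟨p, omegaLim_subset_omegaLim hac hM hA hG
    (mem_omegaLim_of_tendsto (ht.comp hφ.tendsto_atTop) (fun _ => hg _) hp), φ, hφ, hp⟩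

theorem isGlobalAttr_omegaLim (hac : AsympClosed S) (hM : IsCompact M) (hMne : M.Nonempty)
    (hA : AttractsSet S M) : IsGlobalAttr S (omegaLim S M) :=
  ⟨omegaLim_nonempty hM hA hM.isBounded hMne,
    hM.of_isClosed_subset (isClosed_omegaLim S M) (omegaLim_subset_of_attracts hM hA hM.isBounded),
    fun _ ht => image_omegaLim hac hM hA hM.isBounded ht, attractsSet_omegaLim hac hM hA⟩

end CompactAttractor

section OrbitNets

variable {V : Type*} [DecidableEq V] (f : V → V) (F : ℕ → Finset V)

def orbitNets : ℕ → Finset V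
  | 0 => F 0
  | n + 1 => F (n + 1) ∪ (orbitNets n).image f

variable {f F}

theorem subset_orbitNets : ∀ n, F n ⊆ orbitNets f F n
  | 0 => subset_rfl
  | _ + 1 => Finset.subset_union_left

theorem mapsTo_iUnion_orbitNets :
    MapsTo f (⋃ n, (orbitNets f F n : Set V)) (⋃ n, (orbitNets f F n : Set V)) := by
  intro x hx
  obtain ⟨n, hn⟩ := mem_iUnion.1 hx
  exact mem_iUnion.2 ⟨n + 1, Finset.subset_union_right (Finset.mem_image_of_mem f hn)⟩

theorem orbitNets_subset {L : ℕ → Set V} (hF : ∀ n, ↑(F n) ⊆ L n)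
    (hL : ∀ n, MapsTo f (L n) (L (n + 1))) : ∀ n, ↑(orbitNets f F n) ⊆ L n
  | 0 => hF 0
  | n + 1 => by
    simp only [orbitNets, Finset.coe_union, Finset.coe_image]
    exact union_subset (hF _) ((image_mono (orbitNets_subset hF hL n)).trans (hL n).image_subset)

theorem card_orbitNets_le {c h : ℝ} (hh : 1 ≤ h) (hF : ∀ n, ((F n).card : ℝ) ≤ c * h ^ n) :
    ∀ n : ℕ, ((orbitNets f F n).card : ℝ) ≤ (n + 1) * c * h ^ n
  | 0 => by simpa [orbitNets] using hF 0
  | n + 1 => by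
    have hc : 0 ≤ c := by simpa using (Nat.cast_nonneg _).trans (hF 0)
    have hcard : ((orbitNets f F (n + 1)).card : ℝ) ≤
        (F (n + 1)).card + (orbitNets f F n).card := by
      exact_mod_cast (Finset.card_union_le _ _).trans (Nat.add_le_add_left Finset.card_image_le _)
    have hpow : c * h ^ n ≤ c * h ^ (n + 1) :=
      mul_le_mul_of_nonneg_left (pow_le_pow_right₀ hh n.le_succ) hc
    have := card_orbitNets_le hh hF n
    push_cast
    nlinarith [hF (n + 1)]

theorem card_biUnion_orbitNets_union_le {c h : ℝ} (hh : 1 ≤ h)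
    (hF : ∀ n, ((F n).card : ℝ) ≤ c * h ^ n) (m p : ℕ) :
    (((Finset.range (m + p)).biUnion (orbitNets f F) ∪ F m).card : ℝ) ≤
      c * h ^ p * ((m : ℝ) + (p + 1)) ^ 2 * h ^ m := by
  have hc : 0 ≤ c := by simpa using (Nat.cast_nonneg _).trans (hF 0)
  set N := m + p
  have hlevel : ∀ j ∈ Finset.range N, ((orbitNets f F j).card : ℝ) ≤ N * c * h ^ N := by
    intro j hj
    have hjN : j < N := Finset.mem_range.1 hj
    calc ((orbitNets f F j).card : ℝ) ≤ (j + 1) * c * h ^ j := card_orbitNets_le hh hF j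
      _ ≤ N * c * h ^ N := by
        gcongr
        exact_mod_cast hjN
  have hFm : ((F m).card : ℝ) ≤ c * h ^ N :=
    (hF m).trans (mul_le_mul_of_nonneg_left (pow_le_pow_right₀ hh (Nat.le_add_right _ _)) hc)
  have hunion : (((Finset.range N).biUnion (orbitNets f F) ∪ F m).card : ℝ) ≤
      ∑ j ∈ Finset.range N, ((orbitNets f F j).card : ℝ) + (F m).card := by
    exact_mod_cast (Finset.card_union_le _ _).trans (Nat.add_le_add_right Finset.card_biUnion_le _)
  have hsum := Finset.sum_le_sum hlevel
  rw [Finset.sum_const, Finset.card_range, nsmul_eq_mul] at hsum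
  have hNcast : (N : ℝ) = m + p := by push_cast [N]; ring
  have hpow : h ^ N = h ^ p * h ^ m := by rw [← pow_add, add_comm]
  have hhN : 0 ≤ c * h ^ N := by positivity
  rw [hNcast] at hsum
  calc _ ≤ ((m : ℝ) + p) * ((m + p) * c * h ^ N) + c * h ^ N := by linarith
    _ ≤ ((m : ℝ) + p + 1) ^ 2 * (c * h ^ N) := by nlinarith
    _ = c * h ^ p * ((m : ℝ) + (p + 1)) ^ 2 * h ^ m := by rw [hpow]; ring

end OrbitNets

section OrbitNetsMetric

variable {V : Type*} [MetricSpace V] [DecidableEq V] {f : V → V} {F : ℕ → Finset V}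

theorem iUnion_orbitNets_subset_biUnion_ball {L : ℕ → Set V}
    (hW : ∀ n, ↑(orbitNets f F n) ⊆ L n) {m p : ℕ} (htail : ∀ j, m + p ≤ j → L j ⊆ L m)
    {ρ : ℝ} (hρ : 0 < ρ) (hcov : L m ⊆ ⋃ x ∈ F m, ball x ρ) :
    ⋃ n, (orbitNets f F n : Set V) ⊆
      ⋃ x ∈ (Finset.range (m + p)).biUnion (orbitNets f F) ∪ F m, ball x ρ := by
  refine iUnion_subset fun j x hx => ?_
  by_cases hj : j < m + p
  · have hmem : x ∈ (Finset.range (m + p)).biUnion (orbitNets f F) ∪ F m :=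
      Finset.mem_union_left _ (Finset.mem_biUnion.2 ⟨j, Finset.mem_range.2 hj, hx⟩)
    exact mem_iUnion₂.2 ⟨x, hmem, mem_ball_self hρ⟩
  · obtain ⟨y, hy, hxy⟩ := mem_iUnion₂.1 (hcov (htail j (not_lt.1 hj) (hW j hx)))
    exact mem_iUnion₂.2 ⟨y, Finset.mem_union_right _ hy, hxy⟩

theorem totallyBounded_iUnion_orbitNets {L : ℕ → Set V} (hW : ∀ n, ↑(orbitNets f F n) ⊆ L n)
    {p : ℕ} (htail : ∀ m j, m + p ≤ j → L j ⊆ L m) {r q : ℝ} (hr : 0 < r) (hq0 : 0 < q)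
    (hq1 : q < 1) (hcov : ∀ n, L n ⊆ ⋃ x ∈ F n, ball x (r * q ^ n)) :
    TotallyBounded (⋃ n, (orbitNets f F n : Set V)) := by
  refine Metric.totallyBounded_iff.2 fun ε hε => ?_
  have hlim : Tendsto (fun m : ℕ => r * q ^ m) atTop (𝓝 0) := by
    simpa using (tendsto_pow_atTop_nhds_zero_of_lt_one hq0.le hq1).const_mul r
  obtain ⟨m, hm⟩ := (hlim.eventually_lt_const hε).exists
  refine ⟨_, Finset.finite_toSet ((Finset.range (m + p)).biUnion (orbitNets f F) ∪ F m),
    (iUnion_orbitNets_subset_biUnion_ball hW (htail m) (by positivity) (hcov m)).trans ?_⟩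
  exact iUnion₂_mono fun _ _ => ball_subset_ball hm.le

theorem fracDim_closure_iUnion_orbitNets_le {L : ℕ → Set V} (hW : ∀ n, ↑(orbitNets f F n) ⊆ L n)
    {p : ℕ} (htail : ∀ m j, m + p ≤ j → L j ⊆ L m) {r q c h : ℝ} (hr : 0 < r) (hq0 : 0 < q)
    (hq1 : q < 1) (hc : 0 < c) (hh : 1 ≤ h) (hcov : ∀ n, L n ⊆ ⋃ x ∈ F n, ball x (r * q ^ n))
    (hcard : ∀ n, ((F n).card : ℝ) ≤ c * h ^ n)
    (hne : (⋃ n, (orbitNets f F n : Set V)).Nonempty) :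
    fracDim (closure (⋃ n, (orbitNets f F n : Set V))) ≤
      ENNReal.ofReal (Real.log h / Real.log (1 / q)) := by
  refine fracDim_le_of_coverN_geometric_le hne.closure (by positivity : 0 < 4 * r) hq0 hq1
    (Real.log_nonneg hh) (N := fun m => c * h ^ p * ((m : ℝ) + (p + 1)) ^ 2 * h ^ m)
    (fun m => ?_) fun c' hc' => eventually_log_mul_sq_mul_pow_le (by positivity) (by positivity)
      (by positivity) hc'
  calc coverN _ (4 * r * q ^ m) ≤ ((Finset.range (m + p)).biUnion (orbitNets f F) ∪ F m).card := by
        rw [mul_assoc]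
        exact coverN_closure_le_card (by positivity)
          (iUnion_orbitNets_subset_biUnion_ball hW (htail m) (by positivity) (hcov m))
    _ ≤ _ := by
        rw [← ENNReal.ofReal_natCast]
        exact ENNReal.ofReal_le_ofReal (card_biUnion_orbitNets_union_le hh hcard m p)

end OrbitNetsMetric

theorem exists_countable_expAttracting_set {V : Type*} [MetricSpace V] [CompleteSpace V]
    {S : ℝ → V → V} (hS : IsSemiflow S) {T : ℝ} (hT : 0 < T) {B : Set V} (hBne : B.Nonempty)
    (hBbdd : IsBounded B) (hBabs : IsAbsorbingSet S B) {k₀ : ℕ} {a b q h : ℝ} (ha : 0 < a)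
    (hb : 0 < b) (hq0 : 0 < q) (hq1 : q < 1) (hh : 1 ≤ h) (hcov : CoveringCond S T B k₀ a b q h) :
    ∃ E₀ : Set V, E₀.Countable ∧ E₀.Nonempty ∧ E₀ ⊆ B ∧ MapsTo (S T) E₀ E₀ ∧
      IsCompact (closure E₀) ∧ closure E₀ ⊆ E₀ ∪ omegaLim S B ∧
      (∀ ξ, ξ < 1 / T * Real.log (1 / q) → ExpAttractsAt S (closure E₀) ξ) ∧
      fracDim (closure E₀) ≤ ENNReal.ofReal (Real.log h / Real.log (1 / q)) := by
  classical
  obtain ⟨k₁, hk₀₁, hk₁⟩ := hBabs.exists_nat_mul_le hBbdd hT k₀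
  obtain ⟨F, hF⟩ := hcov.exists_nets hb.le (by linarith) hk₀₁
  choose hFL hFcov hFcard using hF
  have hW : ∀ n, ↑(orbitNets (S T) F n) ⊆ S ((k₁ + n : ℕ) * T) '' B :=
    orbitNets_subset hFL fun n => hS.mapsTo_image_nat_mul hT.le (k₁ + n)
  have htail : ∀ m j, m + k₁ ≤ j → S ((k₁ + j : ℕ) * T) '' B ⊆ S ((k₁ + m : ℕ) * T) '' B :=
    fun m j hmj => hS.image_nat_mul_subset_image_nat_mul hT.le hk₁ (by omega)
  set E₀ := ⋃ n, (orbitNets (S T) F n : Set V)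
  have hFE₀ : ∀ n, ↑(F n) ⊆ E₀ := fun n =>
    (Finset.coe_subset.2 (subset_orbitNets n)).trans (subset_iUnion_of_subset n subset_rfl)
  have hne : E₀.Nonempty := by
    obtain ⟨x, hx⟩ := hBne
    obtain ⟨y, hy, -⟩ := mem_iUnion₂.1 (hFcov 0 (mem_image_of_mem _ hx))
    exact ⟨y, hFE₀ 0 hy⟩
  have hr : 0 < a * q ^ k₁ := by positivity
  have hE₀B : E₀ ⊆ B := iUnion_subset fun n =>
    (hW n).trans (hk₁ _ (by gcongr; exact_mod_cast Nat.le_add_right _ _))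
  have hcomp : IsCompact (closure E₀) :=
    (totallyBounded_iUnion_orbitNets hW htail hr hq0 hq1 hFcov).closure.isCompact_of_isClosed
      isClosed_closure
  have hτ : Tendsto (fun n : ℕ => ((k₁ + n : ℕ) : ℝ) * T) atTop atTop :=
    (tendsto_natCast_atTop_atTop.comp
      (tendsto_atTop_mono (fun n => Nat.le_add_left n k₁) tendsto_id)).atTop_mul_const hT
  have hcl : closure E₀ ⊆ E₀ ∪ omegaLim S B :=
    (closure_iUnion_subset_union_iInter_closure fun n => (orbitNets (S T) F n).finite_toSet).trans
      (union_subset_union_right _ (iInter_closure_subset_omegaLim hW hτ))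
  have hexp (ξ : ℝ) (hξ : ξ < 1 / T * Real.log (1 / q)) : ExpAttractsAt S (closure E₀) ξ :=
    expAttractsAt_of_attrDist_image_nat_mul_le hS hT hBabs hq0 hq1.le hξ fun n =>
      (attrDist_mono subset_rfl subset_closure).trans
        (attrDist_le_of_subset_biUnion_ball (hFcov n) (hFE₀ n))
  exact ⟨E₀, countable_iUnion fun n => (orbitNets (S T) F n).countable_toSet, hne, hE₀B,
    mapsTo_iUnion_orbitNets, hcomp, hcl, hexp,
    fracDim_closure_iUnion_orbitNets_le hW htail hr hq0 hq1 (by positivity) hh hFcov hFcard hne⟩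

section Statement2

variable {V : Type*} [MetricSpace V]

theorem construction_Tdiscrete_exponential_attractor
    [CompleteSpace V] (S : ℝ → V → V) (hS : IsSemiflow S) (hac : AsympClosed S)
    (T : ℝ) (hT : 0 < T)
    (B : Set V) (hBne : B.Nonempty) (hBbdd : IsBounded B) (hBabs : IsAbsorbingSet S B)
    (k₀ : ℕ) (a b q h : ℝ) (ha : 0 < a) (hb : 0 < b) (hq0 : 0 < q) (hq1 : q < 1)
    (hh : 1 ≤ h) (hcov : CoveringCond S T B k₀ a b q h) :
    ∃ E₀ : Set V, E₀.Countable ∧ E₀ ⊆ B ∧ closure E₀ ⊆ B ∧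
      IsDiscExpAttr S T (closure E₀) ∧
      (∀ ξ : ℝ, 0 < ξ → ξ < 1 / T * Real.log (1 / q) → ExpAttractsAt S (closure E₀) ξ) ∧
      fracDim (closure E₀) ≤ ENNReal.ofReal (Real.log h / Real.log (1 / q)) ∧
      IsGlobalAttr S (omegaLim S (closure E₀)) ∧
      closure E₀ = omegaLim S (closure E₀) ∪ E₀ := by
  obtain ⟨E₀, hcount, hne, hE₀B, hmaps, hcomp, hcl, hexp, hdim⟩ :=
    exists_countable_expAttracting_set hS hT hBne hBbdd hBabs ha hb hq0 hq1 hh hcov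
  set Λ := omegaLim S (closure E₀)
  have hρ : 0 < 1 / T * Real.log (1 / q) :=
    mul_pos (one_div_pos.2 hT) (Real.log_pos (one_lt_one_div hq0 hq1))
  have hA : AttractsSet S (closure E₀) := (hexp _ (half_lt_self hρ)).attractsSet (half_pos hρ).le
  have hΛ : IsGlobalAttr S Λ := isGlobalAttr_omegaLim hac hcomp hne.closure hA
  have hdecomp : closure E₀ = Λ ∪ E₀ := by
    refine Subset.antisymm (hcl.trans ?_) (union_subset
      (omegaLim_subset_of_attracts hcomp hA hcomp.isBounded) subset_closure)
    rw [union_comm]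
    exact union_subset_union_left _ (omegaLim_subset_omegaLim hac hcomp hA hBbdd)
  have hinv : S T '' closure E₀ ⊆ closure E₀ :=
    calc S T '' closure E₀ = Λ ∪ S T '' E₀ := by
          rw [← hΛ.2.2.1 T hT.le, ← image_union, ← hdecomp]
      _ ⊆ closure E₀ := hdecomp ▸ union_subset_union_right _ hmaps.image_subset
  have hM₀B : closure E₀ ⊆ B := hdecomp ▸
    union_subset (hBabs.subset_of_image_eq hΛ.2.1.isBounded hΛ.2.2.1) hE₀B
  exact ⟨E₀, hcount, hE₀B, hM₀B, ⟨hne.closure, hcomp, hinv,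
    ne_top_of_le_ne_top ENNReal.ofReal_ne_top hdim, _, half_pos hρ, hexp _ (half_lt_self hρ)⟩,
    fun ξ _ => hexp ξ, hdim, hΛ, hdecomp⟩

end Statement2
end

section
/- Let {S(t) : t ≥ 0} be a semigroup on a metric space (V,d), T > 0, and let B be a nonempty bounded subset of V with S(T)B ⊆ B. If the semigroup is quasi-stable on B at time T with respect to a compact seminorm 𝔫_Z on a normed space Z and parameters (η,κ), then for any σ ∈ (0,1−η) the covering condition N^V(S(kT)B, a·q^k) ≤ b·h^k holds for all k ∈ ℕ with q = η+σ, h = 𝔪_Z(σ/(2κ)), a = (3/2)·max{diam^V(B),1} and b = 1. -/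
open Filter Metric Set Topology Bornology
open scoped ENNReal

section QSDefs

/-- `m_ρ(F,ε)`: the maximal cardinality of an `ε`-distinguishable (w.r.t. `ρ`) subset of `F`. -/
noncomputable def maxDisting {α : Type*} (ρ : α → α → ℝ) (F : Set α) (ε : ℝ) : ℝ≥0∞ :=
  ⨆ (U : Finset α) (_ : ↑U ⊆ F) (_ : ∀ x ∈ U, ∀ y ∈ U, x ≠ y → ε ≤ ρ x y),
    (U.card : ℝ≥0∞)

variable {Z : Type*} [NormedAddCommGroup Z]

/-- `n` is a seminorm on `Z`. -/
def IsSeminormFun [NormedSpace ℝ Z] (n : Z → ℝ) : Prop :=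
  (∀ z, 0 ≤ n z) ∧ (∀ z w, n (z + w) ≤ n z + n w) ∧
    (∀ (c : ℝ) (z : Z), n (c • z) = |c| * n z)

/-- `n` is a compact seminorm: every bounded sequence has an `n`-Cauchy subsequence. -/
def IsCompactSeminorm (n : Z → ℝ) : Prop :=
  ∀ zk : ℕ → Z, IsBounded (range zk) → ∃ φ : ℕ → ℕ, StrictMono φ ∧
    ∀ δ : ℝ, 0 < δ → ∃ N : ℕ, ∀ j ≥ N, ∀ l ≥ N, n (zk (φ j) - zk (φ l)) < δ

variable {V : Type*} [MetricSpace V]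

/-- Quasi-stability of the semigroup on `B` at time `T` w.r.t. the seminorm `n` on `Z`
with parameters `(η,κ)`. -/
def QuasiStable (S : ℝ → V → V) (T : ℝ) (B : Set V) (n : Z → ℝ) (η κ : ℝ) : Prop :=
  ∃ K : V → Z, (∀ x ∈ B, ∀ y ∈ B, ‖K x - K y‖ ≤ κ * dist x y) ∧
    (∀ x ∈ B, ∀ y ∈ B, dist (S T x) (S T y) ≤ η * dist x y + n (K x - K y))

/-- `𝔪_Z(μ)`: maximal cardinality of a `μ`-distinguishable (w.r.t. the seminorm `n`)
subset of the closed unit ball of `Z`. -/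
noncomputable def mZ (n : Z → ℝ) (μ : ℝ) : ℝ≥0∞ :=
  maxDisting (fun z w => n (z - w)) (closedBall (0 : Z) 1) μ

end QSDefs

/-!
Cover `B` by the single piece `B` of diameter `D = max (diam B) 1`. If a piece `p ⊆ B` has
diameter at most `D`, then `K` maps it, after rescaling by `(κ D)⁻¹`, into the closed unit ball
of `Z`; a maximal `σ/(2κ)`-separated subset of that image has at most `𝔪_Z(σ/(2κ))` points and
splits `p` into that many parts on which `𝔫_Z(Kx - Ky) < σ D`, so by quasi-stability the image
under `S(T)` of each part has diameter at most `(η + σ) D`. Iterating, `S(kT)B` is covered by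
`𝔪_Z(σ/(2κ))ᵏ` pieces of diameter at most `(η + σ)ᵏ D`, and one point from each piece gives
centers of open balls of radius `(3/2) D (η + σ)ᵏ`.
-/

section DiamCover

variable {V : Type*} [PseudoMetricSpace V]

def HasDiamCover (G : Set V) (D : ℝ) (N : ℝ≥0∞) : Prop :=
  ∃ P : Finset (Set V), (P.card : ℝ≥0∞) ≤ N ∧ G ⊆ ⋃ p ∈ P, p ∧
    ∀ p ∈ P, ∀ x ∈ p, ∀ y ∈ p, dist x y ≤ D

lemma HasDiamCover.image {W : Type*} [PseudoMetricSpace W] {f : V → W} {G : Set V} {D D' : ℝ}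
    {N M : ℝ≥0∞} (h : HasDiamCover G D N)
    (hpiece : ∀ p ⊆ G, (∀ x ∈ p, ∀ y ∈ p, dist x y ≤ D) → HasDiamCover (f '' p) D' M) :
    HasDiamCover (f '' G) D' (N * M) := by
  classical
  obtain ⟨P, hcard, hcover, hdiam⟩ := h
  choose! Q hQcard hQcover hQdiam using fun p (hp : p ∈ P) =>
    hpiece (p ∩ G) inter_subset_right fun x hx y hy => hdiam p hp x hx.1 y hy.1
  refine ⟨P.biUnion Q, ?_, ?_, ?_⟩
  · calc ((P.biUnion Q).card : ℝ≥0∞) ≤ ∑ p ∈ P, ((Q p).card : ℝ≥0∞) := by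
          exact_mod_cast Finset.card_biUnion_le
      _ ≤ P.card • M := Finset.sum_le_card_nsmul _ _ _ hQcard
      _ ≤ N * M := by rw [nsmul_eq_mul]; gcongr
  · rintro _ ⟨x, hx, rfl⟩
    obtain ⟨p, hp, hxp⟩ := mem_iUnion₂.1 (hcover hx)
    obtain ⟨s, hs, hxs⟩ := mem_iUnion₂.1 (hQcover p hp ⟨x, ⟨hxp, hx⟩, rfl⟩)
    exact mem_iUnion₂.2 ⟨s, Finset.mem_biUnion.2 ⟨p, hp, hs⟩, hxs⟩
  · intro s hs
    obtain ⟨p, hp, hs⟩ := Finset.mem_biUnion.1 hs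
    exact hQdiam p hp s hs

end DiamCover

section Covering

variable {V : Type*} [MetricSpace V]

lemma coverN_le_card {G : Set V} {ε : ℝ} (F : Finset V) (hFG : ↑F ⊆ G)
    (hcover : G ⊆ ⋃ x ∈ F, ball x ε) : coverN G ε ≤ F.card :=
  iInf₂_le_of_le F hFG (iInf_le _ hcover)

lemma coverN_le_of_hasDiamCover {G : Set V} {D ε : ℝ} {N : ℝ≥0∞} (h : HasDiamCover G D N)
    (hDε : D < ε) : coverN G ε ≤ N := by
  classical
  obtain ⟨P, hcard, hcover, hdiam⟩ := h
  rcases G.eq_empty_or_nonempty with rfl | ⟨x₀, hx₀⟩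
  · exact (coverN_le_card ∅ (by simp) (by simp)).trans (by simp)
  have hcenter : ∀ p : Set V, ∃ x ∈ G, (p ∩ G).Nonempty → x ∈ p := fun p =>
    if hp : (p ∩ G).Nonempty then ⟨hp.some, hp.some_mem.2, fun _ => hp.some_mem.1⟩
    else ⟨x₀, hx₀, fun h => absurd h hp⟩
  choose c hcG hcp using hcenter
  have hcenters : ↑(P.image c) ⊆ G := fun x hx => by
    obtain ⟨p, -, rfl⟩ := Finset.mem_image.1 hx
    exact hcG p
  refine (coverN_le_card (P.image c) hcenters ?_).trans
    ((Nat.cast_le.2 Finset.card_image_le).trans hcard)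
  intro y hy
  obtain ⟨p, hp, hyp⟩ := mem_iUnion₂.1 (hcover hy)
  exact mem_iUnion₂.2 ⟨c p, Finset.mem_image_of_mem c hp,
    (hdiam p hp y hyp (c p) (hcp p ⟨y, hyp, hy⟩)).trans_lt hDε⟩

end Covering

section Separated

variable {α : Type*} {ρ : α → α → ℝ} {μ : ℝ}

lemma maxDisting_mono {F F' : Set α} (h : F ⊆ F') : maxDisting ρ F μ ≤ maxDisting ρ F' μ :=
  iSup_mono fun _ => iSup_le fun hU => le_iSup_of_le (hU.trans h) le_rfl

/-- A separated subset of `F` of maximal cardinality is a net of `F`. -/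
lemma exists_finset_net_of_maxDisting_ne_top {F : Set α} (hsymm : ∀ x y, ρ x y = ρ y x)
    (hdiag : ∀ x, ρ x x < μ) (hfin : maxDisting ρ F μ ≠ ⊤) :
    ∃ U : Finset α, ↑U ⊆ F ∧ (U.card : ℝ≥0∞) ≤ maxDisting ρ F μ ∧
      ∀ w ∈ F, ∃ u ∈ U, ρ w u < μ := by
  classical
  let Sep (U : Finset α) : Prop := ↑U ⊆ F ∧ ∀ x ∈ U, ∀ y ∈ U, x ≠ y → μ ≤ ρ x y
  have hcard (U : Finset α) (hU : Sep U) : (U.card : ℝ≥0∞) ≤ maxDisting ρ F μ :=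
    le_iSup₂_of_le U hU.1 (le_iSup_of_le hU.2 le_rfl)
  have hempty : Sep ∅ := ⟨by simp, by simp⟩
  set A : Set ℕ := {j | ∃ U, Sep U ∧ U.card = j}
  have hbdd : BddAbove A := by
    refine ⟨⌊(maxDisting ρ F μ).toReal⌋₊, ?_⟩
    rintro _ ⟨U, hU, rfl⟩
    exact Nat.le_floor (by simpa using ENNReal.toReal_mono hfin (hcard U hU))
  obtain ⟨U, hU, hUmax⟩ := Nat.sSup_mem (s := A) ⟨0, ∅, hempty, rfl⟩ hbdd
  refine ⟨U, hU.1, hcard U hU, fun w hw => ?_⟩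
  by_contra! hfar
  have hwU : w ∉ U := fun hwU => (hfar w hwU).not_gt (hdiag w)
  have hsep : Sep (insert w U) := by
    refine ⟨by simpa [Set.insert_subset_iff] using ⟨hw, hU.1⟩, ?_⟩
    simp only [Finset.mem_insert]
    rintro x (rfl | hx) y (rfl | hy) hxy
    · exact absurd rfl hxy
    · exact hfar y hy
    · exact (hfar x hx).trans_eq (hsymm _ _)
    · exact hU.2 x hx y hy hxy
  have := le_csSup hbdd ⟨_, hsep, rfl⟩
  rw [Finset.card_insert_of_notMem hwU, hUmax] at this
  omega

end Separated

def IsSeminormFun.toSeminorm {Z : Type*} [NormedAddCommGroup Z] [NormedSpace ℝ Z] {n : Z → ℝ}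
    (hsn : IsSeminormFun n) : Seminorm ℝ Z :=
  Seminorm.of n hsn.2.1 fun c z => by rw [hsn.2.2, Real.norm_eq_abs]

lemma IsSemiflow.nat_mul_eq_iterate {V : Type*} {S : ℝ → V → V} (hS : IsSemiflow S) {T : ℝ}
    (hT : 0 ≤ T) (k : ℕ) :
    S (k * T) = (S T)^[k] := by
  induction k with
  | zero => funext x; simp [hS.1]
  | succ k ih =>
    funext x
    rw [Function.iterate_succ_apply', ← ih, hS.2 T (k * T) hT (by positivity)]
    push_cast; ring_nf

section QuasiStable

variable {V : Type*} [MetricSpace V] {Z : Type*} [NormedAddCommGroup Z] [NormedSpace ℝ Z]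
  {S : ℝ → V → V} {T : ℝ} {B : Set V} {n : Z → ℝ} {η κ σ : ℝ}

lemma QuasiStable.hasDiamCover_image (hqs : QuasiStable S T B n η κ) (hsn : IsSeminormFun n)
    (hη : 0 ≤ η) (hκ : 0 < κ) (hσ : 0 < σ) (hm : mZ n (σ / (2 * κ)) ≠ ⊤) {p : Set V}
    (hpB : p ⊆ B) {D : ℝ} (hD : 0 < D) (hpD : ∀ x ∈ p, ∀ y ∈ p, dist x y ≤ D) :
    HasDiamCover (S T '' p) ((η + σ) * D) (mZ n (σ / (2 * κ))) := by
  classical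
  obtain ⟨K, hKlip, hST⟩ := hqs
  rcases p.eq_empty_or_nonempty with rfl | ⟨x₀, hx₀⟩
  · exact ⟨∅, by simp, by simp, by simp⟩
  set μ := σ / (2 * κ)
  have hμ : 0 < μ := div_pos hσ (mul_pos two_pos hκ)
  set c := κ * D
  have hc : 0 < c := mul_pos hκ hD
  let f (x : V) : Z := c⁻¹ • (K x - K x₀)
  have hf : f '' p ⊆ closedBall 0 1 := by
    rintro _ ⟨x, hx, rfl⟩
    rw [mem_closedBall_zero_iff, norm_smul, norm_inv, Real.norm_of_nonneg hc.le,
      inv_mul_le_one₀ hc]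
    exact (hKlip x (hpB hx) x₀ (hpB hx₀)).trans
      (mul_le_mul_of_nonneg_left (hpD x hx x₀ hx₀) hκ.le)
  have hK (x y : V) : n (K x - K y) = c * n (f x - f y) := by
    rw [← smul_sub, sub_sub_sub_cancel_right, hsn.2.2, abs_of_pos (inv_pos.2 hc),
      mul_inv_cancel_left₀ hc.ne']
  obtain ⟨U, hUf, hUcard, hnet⟩ := exists_finset_net_of_maxDisting_ne_top
    (ρ := fun z w => n (z - w)) (F := f '' p) (map_sub_rev hsn.toSeminorm)
    (fun z => by rw [sub_self]; exact (map_zero hsn.toSeminorm).trans_lt hμ)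
    (ne_top_of_le_ne_top hm (maxDisting_mono hf))
  refine ⟨U.image fun u => S T '' {x | x ∈ p ∧ n (f x - u) < μ}, ?_, ?_, ?_⟩
  · exact (Nat.cast_le.2 Finset.card_image_le).trans (hUcard.trans (maxDisting_mono hf))
  · rintro _ ⟨x, hx, rfl⟩
    obtain ⟨u, hu, hxu⟩ := hnet (f x) ⟨x, hx, rfl⟩
    exact mem_iUnion₂.2 ⟨_, Finset.mem_image_of_mem _ hu, x, ⟨hx, hxu⟩, rfl⟩
  · simp only [Finset.mem_image]
    rintro _ ⟨u, -, rfl⟩ _ ⟨x, ⟨hx, hxu⟩, rfl⟩ _ ⟨y, ⟨hy, hyu⟩, rfl⟩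
    have hfxy : n (f x - f y) < 2 * μ := calc
      n (f x - f y) = n ((f x - u) - (f y - u)) := by rw [sub_sub_sub_cancel_right]
      _ ≤ n (f x - u) + n (f y - u) := map_sub_le_add hsn.toSeminorm _ _
      _ < 2 * μ := by linarith
    calc dist (S T x) (S T y) ≤ η * dist x y + c * n (f x - f y) :=
          (hST x (hpB hx) y (hpB hy)).trans_eq (by rw [hK])
      _ ≤ η * D + c * (2 * μ) := by gcongr; exact hpD x hx y hy
      _ = (η + σ) * D := by simp only [c, μ]; field_simp

lemma QuasiStable.hasDiamCover_iterate_image (hqs : QuasiStable S T B n η κ)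
    (hsn : IsSeminormFun n) (hη : 0 ≤ η) (hκ : 0 < κ) (hσ : 0 < σ)
    (hm : mZ n (σ / (2 * κ)) ≠ ⊤) (hBinv : S T '' B ⊆ B) {D : ℝ} (hD : 0 < D)
    (hBD : ∀ x ∈ B, ∀ y ∈ B, dist x y ≤ D) (k : ℕ) :
    HasDiamCover ((S T)^[k] '' B) ((η + σ) ^ k * D) (mZ n (σ / (2 * κ)) ^ k) := by
  induction k with
  | zero => exact ⟨{B}, by simp, by simp, by simpa using hBD⟩
  | succ k ih =>
    rw [Function.iterate_succ', image_comp, pow_succ' (η + σ), mul_assoc, pow_succ]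
    exact ih.image fun p hp hpD => hqs.hasDiamCover_image hsn hη hκ hσ hm
      (hp.trans ((mapsTo_iff_image_subset.2 hBinv).iterate k).image_subset)
      (by positivity) hpD

end QuasiStable

section Statement6

variable {V : Type*} [MetricSpace V] {Z : Type*} [NormedAddCommGroup Z] [NormedSpace ℝ Z]

theorem quasi_stability_implies_covering_condition_general
    (S : ℝ → V → V) (hS : IsSemiflow S) (T : ℝ) (hT : 0 < T)
    (B : Set V) (hBbdd : IsBounded B) (hBinv : S T '' B ⊆ B)
    (n : Z → ℝ) (hsn : IsSeminormFun n)
    (η κ : ℝ) (hη0 : 0 ≤ η) (hκ : 0 < κ)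
    (hqs : QuasiStable S T B n η κ) :
    ∀ σ : ℝ, 0 < σ → σ < 1 - η → ∀ k : ℕ, 1 ≤ k →
      coverN (S (k * T) '' B) ((3 / 2 * max (Metric.diam B) 1) * (η + σ) ^ k) ≤
        ENNReal.ofReal 1 * (mZ n (σ / (2 * κ))) ^ k := by
  intro σ hσ _ k hk
  rw [ENNReal.ofReal_one, one_mul]
  rcases eq_or_ne (mZ n (σ / (2 * κ))) ⊤ with hm | hm
  · simp [hm, ENNReal.top_pow (Nat.one_le_iff_ne_zero.1 hk)]
  set D := max (Metric.diam B) 1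
  have hD : 0 < D := lt_max_of_lt_right one_pos
  have hcover := hqs.hasDiamCover_iterate_image hsn hη0 hκ hσ hm hBinv hD
    (fun x hx y hy => (dist_le_diam_of_mem hBbdd hx hy).trans (le_max_left _ _)) k
  rw [hS.nat_mul_eq_iterate hT.le]
  refine coverN_le_of_hasDiamCover hcover ?_
  have : 0 < (η + σ) ^ k * D := by positivity
  linarith

theorem quasi_stability_implies_covering_condition
    (S : ℝ → V → V) (hS : IsSemiflow S) (T : ℝ) (hT : 0 < T)
    (B : Set V) (hBne : B.Nonempty) (hBbdd : IsBounded B) (hBinv : S T '' B ⊆ B)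
    (n : Z → ℝ) (hsn : IsSeminormFun n) (hcs : IsCompactSeminorm n)
    (η κ : ℝ) (hη0 : 0 ≤ η) (hη1 : η < 1) (hκ : 0 < κ)
    (hqs : QuasiStable S T B n η κ) :
    ∀ σ : ℝ, 0 < σ → σ < 1 - η → ∀ k : ℕ, 1 ≤ k →
      coverN (S (k * T) '' B) ((3 / 2 * max (Metric.diam B) 1) * (η + σ) ^ k) ≤
        ENNReal.ofReal 1 * (mZ n (σ / (2 * κ))) ^ k :=
  quasi_stability_implies_covering_condition_general S hS T hT B hBbdd hBinv n hsn η κ hη0 hκ hqs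

end Statement6
end
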